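/- Let a ≥ 0, β ∈ (0,1), p > 1/β, q = p/(p-1). Let b : [0,∞) → ℝ be a nonnegative nondecreasing continuous function, and let l be a nonnegative function with l(t) continuous on (0,∞) and l ∈ Lᵖ_loc[0,∞). If u is a function on (0,∞) with t^{1-β} u(t) continuous and nonnegative on [0,∞) and u(t) ≤ a t^{β-1} + b(t) ∫₀ᵗ (t-s)^{β-1} l(s) u(s) ds for all t ∈ (0,∞), then u(t) ≤ 2^{1-1/p} a t^{β-1} exp((2^{p-1} c(t)^p / p) ∫₀ᵗ l(s)^p ds) for all t ∈ (0,∞), where c(t) = 2^{1/q} b(t) t^{β-1+1/q} / (qβ-q+1)^{1/q}. -/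

import Mathlib

open MeasureTheory Set Filter

/-!
With `v t = t ^ (1 - β) * u t` the hypothesis reads
`v t ≤ a + t ^ (1 - β) b t ∫₀ᵗ s ^ (β - 1) (t - s) ^ (β - 1) l s v s ds`. Hölder's inequality with
exponents `q`, `p` bounds the integral by the `Lq` norm of the kernel times `(∫₀ᵗ lᵖ vᵖ) ^ (1 / p)`.
After the substitution `s = t σ` the `q`-th power of the kernel integrates to
`t ^ (2 α + 1) B(α + 1, α + 1)` with `α = q (β - 1)`, and log-convexity of `Γ` gives
`B(x, x) ≤ 2 / x`; this produces `c t`, and since `c` is nondecreasing,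
`v t ≤ a + c T (∫₀ᵗ lᵖ vᵖ) ^ (1 / p)` for `t ≤ T`. Raising to the `p`-th power with
`(x + y) ^ p ≤ 2 ^ (p - 1) (x ^ p + y ^ p)` gives a linear integral inequality for `vᵖ`, to which
Gronwall's inequality applies.
-/

theorem Real.Gamma_midpoint_sq_le {x y : ℝ} (hx : 0 < x) (hy : 0 < y) :
    Real.Gamma ((x + y) / 2) ^ 2 ≤ Real.Gamma x * Real.Gamma y := by
  have hconv := Real.convexOn_log_Gamma.2 (mem_Ioi.2 hx) (mem_Ioi.2 hy)
    (by norm_num : (0:ℝ) ≤ 1/2) (by norm_num : (0:ℝ) ≤ 1/2) (by norm_num)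
  simp only [smul_eq_mul, Function.comp_apply] at hconv
  rw [show 1 / 2 * x + 1 / 2 * y = (x + y) / 2 by ring] at hconv
  have hΓx := Real.Gamma_pos_of_pos hx
  have hΓy := Real.Gamma_pos_of_pos hy
  have hΓm := Real.Gamma_pos_of_pos (by positivity : 0 < (x + y) / 2)
  rw [← Real.log_le_log_iff (by positivity) (by positivity), Real.log_pow,
    Real.log_mul hΓx.ne' hΓy.ne']
  push_cast
  linarith

theorem Complex.ofReal_rpow_mul_one_sub_rpow {σ : ℝ} (hσ : σ ∈ Icc (0:ℝ) 1) (x y : ℝ) :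
    ((σ ^ x * (1 - σ) ^ y : ℝ) : ℂ) = (σ : ℂ) ^ (x : ℂ) * (1 - (σ : ℂ)) ^ (y : ℂ) := by
  rw [Complex.ofReal_mul, Complex.ofReal_cpow hσ.1, Complex.ofReal_cpow (sub_nonneg.2 hσ.2)]
  push_cast
  rfl

theorem intervalIntegrable_rpow_mul_one_sub_rpow {x y : ℝ} (hx : 0 < x) (hy : 0 < y) :
    IntervalIntegrable (fun σ : ℝ => σ ^ (x - 1) * (1 - σ) ^ (y - 1)) volume 0 1 := by
  have h : IntervalIntegrable
      (fun σ : ℝ => ((σ : ℂ) ^ ((x : ℂ) - 1) * (1 - (σ : ℂ)) ^ ((y : ℂ) - 1)).re) volume 0 1 :=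
    (intervalIntegrable_iff_integrableOn_Ioc_of_le zero_le_one).2
      (Complex.betaIntegral_convergent (u := x) (v := y) (by simpa) (by simpa)).1.re
  refine h.congr fun σ hσ => ?_
  rw [uIoc_of_le zero_le_one] at hσ
  have hσ' := Complex.ofReal_rpow_mul_one_sub_rpow (Ioc_subset_Icc_self hσ) (x - 1) (y - 1)
  push_cast at hσ'
  rw [← hσ', ← Complex.ofReal_mul, Complex.ofReal_re]

theorem Real.Gamma_mul_Gamma_eq_mul_integral {x y : ℝ} (hx : 0 < x) (hy : 0 < y) :
    Real.Gamma x * Real.Gamma y =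
      Real.Gamma (x + y) * ∫ σ in (0:ℝ)..1, σ ^ (x - 1) * (1 - σ) ^ (y - 1) := by
  have hB := Complex.Gamma_mul_Gamma_eq_betaIntegral (s := x) (t := y) (by simpa) (by simpa)
  have hint : Complex.betaIntegral x y =
      ((∫ σ in (0:ℝ)..1, σ ^ (x - 1) * (1 - σ) ^ (y - 1) : ℝ) : ℂ) := by
    rw [Complex.betaIntegral, ← intervalIntegral.integral_ofReal]
    refine intervalIntegral.integral_congr fun σ hσ => ?_
    rw [uIcc_of_le zero_le_one] at hσ
    simp only [Complex.ofReal_rpow_mul_one_sub_rpow hσ]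
    push_cast
    rfl
  rw [hint, ← Complex.ofReal_add, Complex.Gamma_ofReal, Complex.Gamma_ofReal,
    Complex.Gamma_ofReal] at hB
  exact_mod_cast hB

theorem integral_rpow_mul_one_sub_rpow_self_le {x : ℝ} (hx : 0 < x) :
    ∫ σ in (0:ℝ)..1, σ ^ (x - 1) * (1 - σ) ^ (x - 1) ≤ 2 / x := by
  have hB := Real.Gamma_mul_Gamma_eq_mul_integral hx hx
  -- log-convexity of `Γ` between `1` and `1 + 2 x`: `(x Γ(x)) ^ 2 ≤ 2 x Γ(2 x)`
  have hsq := Real.Gamma_midpoint_sq_le zero_lt_one (by positivity : 0 < 1 + 2 * x)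
  rw [show (1 + (1 + 2 * x)) / 2 = x + 1 by ring, Real.Gamma_add_one hx.ne', Real.Gamma_one,
    one_mul, add_comm, Real.Gamma_add_one (by positivity)] at hsq
  rw [← two_mul] at hB
  have hΓ := Real.Gamma_pos_of_pos (by positivity : 0 < 2 * x)
  set J := ∫ σ in (0:ℝ)..1, σ ^ (x - 1) * (1 - σ) ^ (x - 1)
  rw [le_div_iff₀ hx]
  refine le_of_mul_le_mul_right ?_ (mul_pos hx hΓ)
  calc J * x * (x * Real.Gamma (2 * x)) = (x * Real.Gamma x) ^ 2 := by
        linear_combination -x ^ 2 * hB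
    _ ≤ 2 * (x * Real.Gamma (2 * x)) := by linarith

theorem integral_rpow_mul_sub_rpow {t : ℝ} (ht : 0 < t) (γ α : ℝ) :
    ∫ s in (0:ℝ)..t, s ^ γ * (t - s) ^ α =
      t ^ (γ + α + 1) * ∫ σ in (0:ℝ)..1, σ ^ γ * (1 - σ) ^ α := by
  have hscale := intervalIntegral.smul_integral_comp_mul_left
    (fun s => s ^ γ * (t - s) ^ α) t (a := 0) (b := 1)
  rw [mul_zero, mul_one, smul_eq_mul] at hscale
  rw [← hscale, ← intervalIntegral.integral_const_mul, ← intervalIntegral.integral_const_mul]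
  refine intervalIntegral.integral_congr fun σ hσ => ?_
  rw [uIcc_of_le zero_le_one] at hσ
  rw [show t - t * σ = t * (1 - σ) by ring, Real.mul_rpow ht.le hσ.1,
    Real.mul_rpow ht.le (sub_nonneg.2 hσ.2), Real.rpow_add ht, Real.rpow_add ht, Real.rpow_one]
  ring

theorem intervalIntegrable_rpow_mul_sub_rpow {t γ α : ℝ} (ht : 0 < t) (hγ : -1 < γ)
    (hα : -1 < α) :
    IntervalIntegrable (fun s : ℝ => s ^ γ * (t - s) ^ α) volume 0 t := by
  have h := ((intervalIntegrable_rpow_mul_one_sub_rpow (x := γ + 1) (y := α + 1) (by linarith)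
    (by linarith)).comp_mul_left (c := t⁻¹)).const_mul (t ^ (γ + α))
  rw [zero_div, one_div, inv_inv] at h
  refine h.congr fun s hs => ?_
  rw [uIoc_of_le ht.le] at hs
  simp only [add_sub_cancel_right]
  rw [show 1 - t⁻¹ * s = t⁻¹ * (t - s) by field_simp, Real.mul_rpow (by positivity) hs.1.le,
    Real.mul_rpow (by positivity) (sub_nonneg.2 hs.2), Real.inv_rpow ht.le, Real.inv_rpow ht.le,
    Real.rpow_add ht]
  field_simp

theorem integral_rpow_mul_sub_rpow_self_le {t α : ℝ} (ht : 0 < t) (hα : -1 < α) :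
    ∫ s in (0:ℝ)..t, s ^ α * (t - s) ^ α ≤ 2 * t ^ (2 * α + 1) / (α + 1) := by
  have hB := integral_rpow_mul_one_sub_rpow_self_le (x := α + 1) (by linarith)
  simp only [add_sub_cancel_right] at hB
  rw [integral_rpow_mul_sub_rpow ht, show α + α + 1 = 2 * α + 1 by ring]
  calc t ^ (2 * α + 1) * ∫ σ in (0:ℝ)..1, σ ^ α * (1 - σ) ^ α
      ≤ t ^ (2 * α + 1) * (2 / (α + 1)) := by gcongr
    _ = 2 * t ^ (2 * α + 1) / (α + 1) := by ring

theorem memLp_ofReal_of_integrable_rpow {α : Type*} [MeasurableSpace α] {μ : Measure α}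
    {p : ℝ} (hp : 0 < p) {f : α → ℝ} (hf_nonneg : 0 ≤ᵐ[μ] f) (hf : AEStronglyMeasurable f μ)
    (hint : Integrable (fun x => f x ^ p) μ) : MemLp f (ENNReal.ofReal p) μ := by
  refine (integrable_norm_rpow_iff hf (by simpa using hp) ENNReal.ofReal_ne_top).1 ?_
  rw [ENNReal.toReal_ofReal hp.le]
  exact hint.congr (hf_nonneg.mono fun x hx => by simp only [Real.norm_of_nonneg hx])

theorem integral_rpow_mul_sub_rpow_mul_le {p q β t : ℝ} {g : ℝ → ℝ} (hpq : p.HolderConjugate q)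
    (hβq : 0 < (β - 1) * q + 1) (ht : 0 < t) (hg_nonneg : ∀ s ∈ Ioc 0 t, 0 ≤ g s)
    (hg_meas : AEStronglyMeasurable g (volume.restrict (Ioc 0 t)))
    (hg_int : IntervalIntegrable (fun s => g s ^ p) volume 0 t) :
    ∫ s in (0:ℝ)..t, s ^ (β - 1) * (t - s) ^ (β - 1) * g s ≤
      (2 * t ^ (2 * ((β - 1) * q) + 1) / ((β - 1) * q + 1)) ^ (1 / q) *
        (∫ s in (0:ℝ)..t, g s ^ p) ^ (1 / p) := by
  set α := (β - 1) * q
  set F : ℝ → ℝ := fun s => s ^ (β - 1) * (t - s) ^ (β - 1)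
  have hF_nonneg : ∀ s ∈ Ioc 0 t, 0 ≤ F s := fun s hs =>
    mul_nonneg (Real.rpow_nonneg hs.1.le _) (Real.rpow_nonneg (sub_nonneg.2 hs.2) _)
  have hFq : EqOn (fun s => F s ^ q) (fun s => s ^ α * (t - s) ^ α) (Ioc 0 t) := fun s hs => by
    simp only [F, α]
    rw [Real.mul_rpow (Real.rpow_nonneg hs.1.le _) (Real.rpow_nonneg (sub_nonneg.2 hs.2) _),
      ← Real.rpow_mul hs.1.le, ← Real.rpow_mul (sub_nonneg.2 hs.2)]
  have hF_int : IntervalIntegrable (fun s => F s ^ q) volume 0 t :=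
    (intervalIntegrable_rpow_mul_sub_rpow (γ := α) (α := α) ht (by linarith)
      (by linarith)).congr (by rw [uIoc_of_le ht.le]; exact hFq.symm)
  have hF_integral : ∫ s in (0:ℝ)..t, F s ^ q = ∫ s in (0:ℝ)..t, s ^ α * (t - s) ^ α := by
    simp only [intervalIntegral.integral_of_le ht.le]
    exact setIntegral_congr_fun measurableSet_Ioc hFq
  have hF_nonneg_ae : 0 ≤ᵐ[volume.restrict (Ioc 0 t)] F :=
    ae_restrict_of_forall_mem measurableSet_Ioc hF_nonneg
  have hg_nonneg_ae : 0 ≤ᵐ[volume.restrict (Ioc 0 t)] g :=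
    ae_restrict_of_forall_mem measurableSet_Ioc hg_nonneg
  have hholder := integral_mul_le_Lp_mul_Lq_of_nonneg hpq.symm hF_nonneg_ae hg_nonneg_ae
    (memLp_ofReal_of_integrable_rpow hpq.symm.pos hF_nonneg_ae
      (by fun_prop) ((intervalIntegrable_iff_integrableOn_Ioc_of_le ht.le).1 hF_int))
    (memLp_ofReal_of_integrable_rpow hpq.pos hg_nonneg_ae hg_meas
      ((intervalIntegrable_iff_integrableOn_Ioc_of_le ht.le).1 hg_int))
  rw [← intervalIntegral.integral_of_le ht.le, ← intervalIntegral.integral_of_le ht.le,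
    ← intervalIntegral.integral_of_le ht.le, hF_integral] at hholder
  have hg_integral_nonneg : 0 ≤ ∫ s in (0:ℝ)..t, g s ^ p := by
    rw [intervalIntegral.integral_of_le ht.le]
    exact setIntegral_nonneg measurableSet_Ioc fun s hs => Real.rpow_nonneg (hg_nonneg s hs) _
  have hkernel_nonneg : 0 ≤ ∫ s in (0:ℝ)..t, s ^ α * (t - s) ^ α :=
    intervalIntegral.integral_nonneg ht.le fun s hs =>
      mul_nonneg (Real.rpow_nonneg hs.1 _) (Real.rpow_nonneg (sub_nonneg.2 hs.2) _)
  refine hholder.trans (mul_le_mul_of_nonneg_right ?_ (Real.rpow_nonneg hg_integral_nonneg _))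
  exact Real.rpow_le_rpow hkernel_nonneg (integral_rpow_mul_sub_rpow_self_le ht (by linarith))
    (one_div_nonneg.2 hpq.symm.nonneg)

theorem hasDerivAt_integral_of_mem_Ioo {f : ℝ → ℝ} {a b t : ℝ}
    (hf_int : IntervalIntegrable f volume a b) (hf_cont : ContinuousOn f (Ioo a b))
    (ht : t ∈ Ioo a b) : HasDerivAt (fun r => ∫ s in a..r, f s) (f t) t := by
  refine intervalIntegral.integral_hasDerivAt_right (hf_int.mono_set ?_)
    (hf_cont.stronglyMeasurableAtFilter isOpen_Ioo _ ht)
    (hf_cont.continuousAt (Ioo_mem_nhds ht.1 ht.2))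
  rw [uIcc_of_le ht.1.le, uIcc_of_le (ht.1.trans ht.2).le]
  exact Icc_subset_Icc_right ht.2.le

theorem continuousOn_integral_Icc {f : ℝ → ℝ} {a b : ℝ} (hab : a ≤ b)
    (hf_int : IntervalIntegrable f volume a b) :
    ContinuousOn (fun r => ∫ s in a..r, f s) (Icc a b) := by
  rw [← uIcc_of_le hab]
  exact intervalIntegral.continuousOn_primitive_interval' hf_int left_mem_uIcc

theorem antitoneOn_add_integral_mul_exp_neg_integral {T A : ℝ} {K w : ℝ → ℝ} (hT : 0 ≤ T)
    (hK_cont : ContinuousOn K (Ioo 0 T)) (hK_nonneg : ∀ s ∈ Ioo 0 T, 0 ≤ K s)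
    (hK_int : IntervalIntegrable K volume 0 T) (hw_cont : ContinuousOn w (Icc 0 T))
    (hw : ∀ t ∈ Ioo 0 T, w t ≤ A + ∫ s in (0:ℝ)..t, K s * w s) :
    AntitoneOn (fun r => (A + ∫ s in (0:ℝ)..r, K s * w s) * Real.exp (-∫ s in (0:ℝ)..r, K s))
      (Icc 0 T) := by
  have hKw_int : IntervalIntegrable (fun s => K s * w s) volume 0 T :=
    hK_int.mul_continuousOn (by rwa [uIcc_of_le hT])
  have hKw_cont : ContinuousOn (fun s => K s * w s) (Ioo 0 T) :=
    hK_cont.mul (hw_cont.mono Ioo_subset_Icc_self)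
  refine antitoneOn_of_hasDerivWithinAt_nonpos (convex_Icc 0 T) (f' := fun t =>
      K t * w t * Real.exp (-∫ s in (0:ℝ)..t, K s) +
        (A + ∫ s in (0:ℝ)..t, K s * w s) * (Real.exp (-∫ s in (0:ℝ)..t, K s) * -K t))
    ((continuousOn_const.add (continuousOn_integral_Icc hT hKw_int)).mul
      (continuousOn_integral_Icc hT hK_int).neg.rexp) (fun t ht => ?_) (fun t ht => ?_)
  · rw [interior_Icc] at ht
    exact (((hasDerivAt_integral_of_mem_Ioo hKw_int hKw_cont ht).const_add A).mul
      (hasDerivAt_integral_of_mem_Ioo hK_int hK_cont ht).neg.exp).hasDerivWithinAt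
  · rw [interior_Icc] at ht
    have hwt := hw t ht
    have hKt := hK_nonneg t ht
    have hexp := Real.exp_pos (-∫ s in (0:ℝ)..t, K s)
    calc K t * w t * Real.exp (-∫ s in (0:ℝ)..t, K s) + (A + ∫ s in (0:ℝ)..t, K s * w s) *
          (Real.exp (-∫ s in (0:ℝ)..t, K s) * -K t)
        = K t * Real.exp (-∫ s in (0:ℝ)..t, K s) * (w t - (A + ∫ s in (0:ℝ)..t, K s * w s)) := by
          ring
      _ ≤ 0 := mul_nonpos_of_nonneg_of_nonpos (by positivity) (by linarith)

theorem le_mul_exp_integral_of_le_add_integral {T A : ℝ} {K w : ℝ → ℝ} (hT : 0 < T)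
    (hK_cont : ContinuousOn K (Ioo 0 T)) (hK_nonneg : ∀ s ∈ Ioo 0 T, 0 ≤ K s)
    (hK_int : IntervalIntegrable K volume 0 T) (hw_cont : ContinuousOn w (Icc 0 T))
    (hw : ∀ t ∈ Ioc 0 T, w t ≤ A + ∫ s in (0:ℝ)..t, K s * w s) :
    w T ≤ A * Real.exp (∫ s in (0:ℝ)..T, K s) := by
  have hanti := antitoneOn_add_integral_mul_exp_neg_integral hT.le hK_cont hK_nonneg hK_int
    hw_cont (fun t ht => hw t (Ioo_subset_Ioc_self ht))
    (left_mem_Icc.2 hT.le) (right_mem_Icc.2 hT.le) hT.le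
  simp only [intervalIntegral.integral_same, add_zero, neg_zero, Real.exp_zero, mul_one] at hanti
  calc w T ≤ A + ∫ s in (0:ℝ)..T, K s * w s := hw T (right_mem_Ioc.2 hT)
    _ ≤ A * Real.exp (∫ s in (0:ℝ)..T, K s) := by
      rwa [Real.exp_neg, mul_inv_le_iff₀ (Real.exp_pos _)] at hanti

theorem Real.rpow_add_le_mul_rpow_add_rpow {x y p : ℝ} (hx : 0 ≤ x) (hy : 0 ≤ y) (hp : 1 ≤ p) :
    (x + y) ^ p ≤ 2 ^ (p - 1) * (x ^ p + y ^ p) := by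
  lift x to NNReal using hx
  lift y to NNReal using hy
  exact_mod_cast NNReal.rpow_add_le_mul_rpow_add_rpow x y hp

theorem le_mul_exp_of_le_add_mul_integral_rpow {p T a C : ℝ} {k v : ℝ → ℝ} (hp : 1 ≤ p)
    (hT : 0 < T) (ha : 0 ≤ a) (hC : 0 ≤ C) (hk_cont : ContinuousOn k (Ioo 0 T))
    (hk_nonneg : ∀ s ∈ Ioc 0 T, 0 ≤ k s) (hk_int : IntervalIntegrable k volume 0 T)
    (hv_cont : ContinuousOn v (Icc 0 T)) (hv_nonneg : ∀ s ∈ Icc 0 T, 0 ≤ v s)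
    (hv : ∀ t ∈ Ioc 0 T, v t ≤ a + C * (∫ s in (0:ℝ)..t, k s * v s ^ p) ^ (1 / p)) :
    v T ≤ 2 ^ (1 - 1 / p) * a * Real.exp (2 ^ (p - 1) * C ^ p / p * ∫ s in (0:ℝ)..T, k s) := by
  have hp0 : 0 < p := by linarith
  set D := (2:ℝ) ^ (p - 1) * C ^ p
  have hvp : ∀ t ∈ Ioc 0 T, v t ^ p ≤ 2 ^ (p - 1) * a ^ p + ∫ s in (0:ℝ)..t, D * k s * v s ^ p := by
    intro t ht
    have hI : 0 ≤ ∫ s in (0:ℝ)..t, k s * v s ^ p := by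
      rw [intervalIntegral.integral_of_le ht.1.le]
      exact setIntegral_nonneg measurableSet_Ioc fun s hs => mul_nonneg
        (hk_nonneg s ⟨hs.1, hs.2.trans ht.2⟩)
        (Real.rpow_nonneg (hv_nonneg s ⟨hs.1.le, hs.2.trans ht.2⟩) _)
    set I := ∫ s in (0:ℝ)..t, k s * v s ^ p
    calc v t ^ p ≤ (a + C * I ^ (1 / p)) ^ p :=
          Real.rpow_le_rpow (hv_nonneg t (Ioc_subset_Icc_self ht)) (hv t ht) hp0.le
      _ ≤ 2 ^ (p - 1) * (a ^ p + (C * I ^ (1 / p)) ^ p) :=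
          Real.rpow_add_le_mul_rpow_add_rpow ha (by positivity) hp
      _ = 2 ^ (p - 1) * a ^ p + ∫ s in (0:ℝ)..t, D * k s * v s ^ p := by
          simp only [mul_assoc, intervalIntegral.integral_const_mul]
          rw [Real.mul_rpow hC (by positivity), ← Real.rpow_mul hI, one_div_mul_cancel hp0.ne',
            Real.rpow_one]
          ring
  have hgronwall := le_mul_exp_integral_of_le_add_integral (K := fun s => D * k s) hT
    (continuousOn_const.mul hk_cont) (fun s hs => mul_nonneg (by positivity)
      (hk_nonneg s (Ioo_subset_Ioc_self hs))) (hk_int.const_mul D)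
    (hv_cont.rpow_const fun _ _ => Or.inr hp0.le) hvp
  rw [intervalIntegral.integral_const_mul] at hgronwall
  have hvT := hv_nonneg T (right_mem_Icc.2 hT.le)
  calc v T = (v T ^ p) ^ (1 / p) := by
        rw [← Real.rpow_mul hvT, mul_one_div_cancel hp0.ne', Real.rpow_one]
    _ ≤ (2 ^ (p - 1) * a ^ p * Real.exp (D * ∫ s in (0:ℝ)..T, k s)) ^ (1 / p) :=
        Real.rpow_le_rpow (by positivity) hgronwall (by positivity)
    _ = 2 ^ (1 - 1 / p) * a * Real.exp (D / p * ∫ s in (0:ℝ)..T, k s) := by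
        rw [Real.mul_rpow (by positivity) (Real.exp_pos _).le,
          Real.mul_rpow (by positivity) (by positivity), ← Real.rpow_mul zero_le_two,
          ← Real.rpow_mul ha, mul_one_div_cancel hp0.ne', Real.rpow_one, ← Real.exp_mul]
        congr 2 <;> field_simp

theorem rpow_one_sub_mul_kernel_bound_eq {β q t : ℝ} (hq : q ≠ 0) (hβq : 0 ≤ (β - 1) * q + 1)
    (ht : 0 < t) :
    t ^ (1 - β) * (2 * t ^ (2 * ((β - 1) * q) + 1) / ((β - 1) * q + 1)) ^ (1 / q) =
      2 ^ (1 / q) * t ^ (β - 1 + 1 / q) / (q * β - q + 1) ^ (1 / q) := by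
  have hexp : 1 - β + (2 * ((β - 1) * q) + 1) * (1 / q) = β - 1 + 1 / q := by
    field_simp
    ring
  rw [Real.div_rpow (by positivity) hβq, Real.mul_rpow zero_le_two (by positivity),
    ← Real.rpow_mul ht.le, show (β - 1) * q + 1 = q * β - q + 1 by ring, ← hexp,
    Real.rpow_add ht]
  ring

theorem rpow_one_sub_mul_le_of_le_add_mul_integral {a β p q t B C : ℝ} {l u : ℝ → ℝ}
    (hpq : p.HolderConjugate q) (hβq : 0 < q * β - q + 1) (ht : 0 < t) (hB : 0 ≤ B)
    (hl_nonneg : ∀ s ∈ Ioc 0 t, 0 ≤ l s) (hl_cont : ContinuousOn l (Ioc 0 t))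
    (hl_int : IntervalIntegrable (fun s => l s ^ p) volume 0 t)
    (hv_nonneg : ∀ s ∈ Icc 0 t, 0 ≤ s ^ (1 - β) * u s)
    (hv_cont : ContinuousOn (fun s => s ^ (1 - β) * u s) (Icc 0 t))
    (hu : u t ≤ a * t ^ (β - 1) + B * ∫ s in (0:ℝ)..t, (t - s) ^ (β - 1) * (l s * u s))
    (hC : 2 ^ (1 / q) * B * t ^ (β - 1 + 1 / q) / (q * β - q + 1) ^ (1 / q) ≤ C) :
    t ^ (1 - β) * u t ≤
      a + C * (∫ s in (0:ℝ)..t, l s ^ p * (s ^ (1 - β) * u s) ^ p) ^ (1 / p) := by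
  set v : ℝ → ℝ := fun s => s ^ (1 - β) * u s
  have hβq' : 0 < (β - 1) * q + 1 := by linarith
  have hu_eq : ∀ s, 0 < s → u s = s ^ (β - 1) * v s := fun s hs => by
    rw [← mul_assoc, ← Real.rpow_add hs]
    simp
  have hlv_pow : EqOn (fun s => (l s * v s) ^ p) (fun s => l s ^ p * v s ^ p) (Ioc 0 t) :=
    fun s hs => Real.mul_rpow (hl_nonneg s hs) (hv_nonneg s (Ioc_subset_Icc_self hs))
  have hlv_int : IntervalIntegrable (fun s => l s ^ p * v s ^ p) volume 0 t :=
    hl_int.mul_continuousOn (by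
      rw [uIcc_of_le ht.le]; exact hv_cont.rpow_const fun _ _ => Or.inr hpq.nonneg)
  have hholder := integral_rpow_mul_sub_rpow_mul_le (g := fun s => l s * v s) hpq hβq' ht
    (fun s hs => mul_nonneg (hl_nonneg s hs) (hv_nonneg s (Ioc_subset_Icc_self hs)))
    ((hl_cont.mul (hv_cont.mono Ioc_subset_Icc_self)).aestronglyMeasurable measurableSet_Ioc)
    (hlv_int.congr (by rw [uIoc_of_le ht.le]; exact hlv_pow.symm))
  have hkernel : ∫ s in (0:ℝ)..t, (t - s) ^ (β - 1) * (l s * u s) =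
      ∫ s in (0:ℝ)..t, s ^ (β - 1) * (t - s) ^ (β - 1) * (l s * v s) := by
    simp only [intervalIntegral.integral_of_le ht.le]
    refine setIntegral_congr_fun measurableSet_Ioc fun s hs => ?_
    simp only [hu_eq s hs.1]
    ring
  have hpower : ∫ s in (0:ℝ)..t, (l s * v s) ^ p = ∫ s in (0:ℝ)..t, l s ^ p * v s ^ p := by
    simp only [intervalIntegral.integral_of_le ht.le]
    exact setIntegral_congr_fun measurableSet_Ioc hlv_pow
  have hI : 0 ≤ ∫ s in (0:ℝ)..t, l s ^ p * v s ^ p := by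
    rw [intervalIntegral.integral_of_le ht.le]
    exact setIntegral_nonneg measurableSet_Ioc fun s hs => mul_nonneg
      (Real.rpow_nonneg (hl_nonneg s hs) _)
      (Real.rpow_nonneg (hv_nonneg s (Ioc_subset_Icc_self hs)) _)
  rw [hpower] at hholder
  calc t ^ (1 - β) * u t
      ≤ t ^ (1 - β) * (a * t ^ (β - 1) + B * ∫ s in (0:ℝ)..t, (t - s) ^ (β - 1) * (l s * u s)) :=
        mul_le_mul_of_nonneg_left hu (by positivity)
    _ = a + B * (t ^ (1 - β) * ∫ s in (0:ℝ)..t, (t - s) ^ (β - 1) * (l s * u s)) := by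
        rw [mul_add, mul_left_comm, ← Real.rpow_add ht]
        simp only [sub_add_sub_cancel', sub_self, Real.rpow_zero]
        ring
    _ ≤ a + B * (t ^ (1 - β) * ((2 * t ^ (2 * ((β - 1) * q) + 1) / ((β - 1) * q + 1)) ^ (1 / q) *
          (∫ s in (0:ℝ)..t, l s ^ p * v s ^ p) ^ (1 / p))) := by
        rw [hkernel]
        gcongr
    _ = a + 2 ^ (1 / q) * B * t ^ (β - 1 + 1 / q) / (q * β - q + 1) ^ (1 / q) *
          (∫ s in (0:ℝ)..t, l s ^ p * v s ^ p) ^ (1 / p) := by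
        rw [← mul_assoc (t ^ (1 - β)), rpow_one_sub_mul_kernel_bound_eq hpq.symm.ne_zero hβq'.le ht]
        ring
    _ ≤ a + C * (∫ s in (0:ℝ)..t, l s ^ p * v s ^ p) ^ (1 / p) := by
        gcongr

theorem stmt6_general (a β p q : ℝ) (ha : 0 ≤ a)
    (hβ : β ∈ Ioo (0:ℝ) 1) (hp : 1/β < p) (hq : q = p / (p - 1))
    (b : ℝ → ℝ)
    (hb_mono : MonotoneOn b (Ici 0))
    (hb_nonneg : ∀ t ∈ Ici (0:ℝ), 0 ≤ b t)
    (l : ℝ → ℝ)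
    (hl_nonneg : ∀ t ∈ Ioi (0:ℝ), 0 ≤ l t)
    (hl_cont : ContinuousOn l (Ioi 0))
    (hl_lp : ∀ t : ℝ, 0 ≤ t → IntervalIntegrable (fun s => l s ^ p) volume 0 t)
    (u : ℝ → ℝ)
    (hu_cont : ContinuousOn (fun t => t ^ (1 - β) * u t) (Ici 0))
    (hu_nonneg : ∀ t ∈ Ici (0:ℝ), 0 ≤ t ^ (1 - β) * u t)
    (hu : ∀ t ∈ Ioi (0:ℝ),
      u t ≤ a * t ^ (β - 1) + b t * ∫ s in (0:ℝ)..t, (t - s) ^ (β - 1) * (l s * u s))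
    (c : ℝ → ℝ)
    (hc : ∀ t, c t = (2:ℝ) ^ (1/q) * b t * t ^ (β - 1 + 1/q) / (q * β - q + 1) ^ (1/q)) :
    ∀ t ∈ Ioi (0:ℝ),
      u t ≤ (2:ℝ) ^ (1 - 1/p) * a * t ^ (β - 1) *
        Real.exp (((2:ℝ) ^ (p - 1) * c t ^ p / p) * ∫ s in (0:ℝ)..t, l s ^ p) := by
  obtain ⟨hβ0, hβ1⟩ := hβ
  have hpq : p.HolderConjugate q :=
    (Real.holderConjugate_iff_eq_conjExponent ((one_lt_one_div hβ0 hβ1).trans hp)).2 hq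
  have hexp : 0 < β - 1 + 1 / q := by
    linarith [(one_div_lt hβ0 hpq.pos).1 hp, hpq.one_div_add_one_div]
  have hβq : 0 < q * β - q + 1 := by
    nlinarith [mul_pos hpq.symm.pos hexp, mul_one_div_cancel hpq.symm.ne_zero]
  intro T (hT : 0 < T)
  have hbT := hb_nonneg T hT.le
  have hc_mono : ∀ t ∈ Ioc 0 T, c t ≤ c T := by
    rintro t ⟨ht0, htT⟩
    rw [hc, hc]
    gcongr
    exact hb_mono ht0.le hT.le htT
  have hv := fun t (ht : t ∈ Ioc 0 T) => rpow_one_sub_mul_le_of_le_add_mul_integral hpq hβq ht.1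
    (hb_nonneg t ht.1.le) (fun s hs => hl_nonneg s hs.1) (hl_cont.mono Ioc_subset_Ioi_self)
    (hl_lp t ht.1.le) (fun s hs => hu_nonneg s hs.1) (hu_cont.mono Icc_subset_Ici_self) (hu t ht.1)
    ((hc t).ge.trans (hc_mono t ht))
  have hvT := le_mul_exp_of_le_add_mul_integral_rpow hpq.lt.le hT ha (by rw [hc]; positivity)
    ((hl_cont.mono Ioo_subset_Ioi_self).rpow_const fun _ _ => Or.inr hpq.nonneg)
    (fun s hs => Real.rpow_nonneg (hl_nonneg s hs.1) _) (hl_lp T hT.le)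
    (hu_cont.mono Icc_subset_Ici_self) (fun s hs => hu_nonneg s hs.1) hv
  calc u T = T ^ (β - 1) * (T ^ (1 - β) * u T) := by
        rw [← mul_assoc, ← Real.rpow_add hT]; simp
    _ ≤ T ^ (β - 1) * (2 ^ (1 - 1 / p) * a *
          Real.exp (2 ^ (p - 1) * c T ^ p / p * ∫ s in (0:ℝ)..T, l s ^ p)) := by gcongr
    _ = _ := by ring

/-- Corollary 2.6, case γ = 1:
`u(t) ≤ a t^{β-1} + b(t) ∫₀ᵗ (t-s)^{β-1} l(s) u(s) ds` implies
`u(t) ≤ 2^{1-1/p} a t^{β-1} exp((2^{p-1} c(t)^p / p) ∫₀ᵗ l(s)^p ds)`,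
where `c(t) = 2^{1/q} b(t) t^{β-1+1/q} / (qβ-q+1)^{1/q}`. -/
theorem stmt6 (a β p q : ℝ) (ha : 0 ≤ a)
    (hβ : β ∈ Ioo (0:ℝ) 1) (hp : 1/β < p) (hq : q = p / (p - 1))
    (b : ℝ → ℝ)
    (hb_cont : ContinuousOn b (Ici 0)) (hb_mono : MonotoneOn b (Ici 0))
    (hb_nonneg : ∀ t ∈ Ici (0:ℝ), 0 ≤ b t)
    (l : ℝ → ℝ)
    (hl_nonneg : ∀ t ∈ Ioi (0:ℝ), 0 ≤ l t)
    (hl_cont : ContinuousOn l (Ioi 0))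
    (hl_lp : ∀ t : ℝ, 0 ≤ t → IntervalIntegrable (fun s => l s ^ p) volume 0 t)
    (u : ℝ → ℝ)
    (hu_cont : ContinuousOn (fun t => t ^ (1 - β) * u t) (Ici 0))
    (hu_nonneg : ∀ t ∈ Ici (0:ℝ), 0 ≤ t ^ (1 - β) * u t)
    (hu : ∀ t ∈ Ioi (0:ℝ),
      u t ≤ a * t ^ (β - 1) + b t * ∫ s in (0:ℝ)..t, (t - s) ^ (β - 1) * (l s * u s))
    (c : ℝ → ℝ)
    (hc : ∀ t, c t = (2:ℝ) ^ (1/q) * b t * t ^ (β - 1 + 1/q) / (q * β - q + 1) ^ (1/q)) :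
    ∀ t ∈ Ioi (0:ℝ),
      u t ≤ (2:ℝ) ^ (1 - 1/p) * a * t ^ (β - 1) *
        Real.exp (((2:ℝ) ^ (p - 1) * c t ^ p / p) * ∫ s in (0:ℝ)..t, l s ^ p) :=
  stmt6_general a β p q ha hβ hp hq b hb_mono hb_nonneg l hl_nonneg hl_cont hl_lp u hu_cont
    hu_nonneg hu c hc
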